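/- arXiv:2309.07325 — 2 statements merged into one kernel-verified Lean document; each statement's English description precedes it below -/
import Mathlib

section
/- With the parallel bases μ·b∥ᵢ = δᵢ·a∥ᵢ (i = 1,2), the vectors d∥ᵢ = (gcd(μ,δᵢ)/δᵢ)·b∥ᵢ = (gcd(μ,δᵢ)/μ)·a∥ᵢ form a basis of the sum lattice 𝒟 = 𝒜 + ℬ. -/
def latt (M : Matrix (Fin 2) (Fin 2) ℝ) : Set (Fin 2 → ℝ) :=
  {v | ∃ z : Fin 2 → ℤ, v = M.mulVec (fun i => (z i : ℝ))}

/-!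
Write `gᵢ = gcd(μ, δᵢ) = xᵢ μ + yᵢ δᵢ`. Then `d∥ᵢ = (gᵢ/μ) a∥ᵢ = xᵢ a∥ᵢ + yᵢ b∥ᵢ` lies in `𝒜 + ℬ`,
while `a∥ᵢ = (μ/gᵢ) d∥ᵢ` and `b∥ᵢ = (δᵢ/gᵢ) d∥ᵢ` are integer multiples of `d∥ᵢ`. As `U` and `V`
are unimodular, the columns of `A∥` and `B∥` still generate `𝒜` and `ℬ`, so the lattice spanned by
the `d∥ᵢ` is exactly `𝒜 + ℬ`.
-/

open Matrix

lemma add_mem_latt {M : Matrix (Fin 2) (Fin 2) ℝ} {u v : Fin 2 → ℝ}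
    (hu : u ∈ latt M) (hv : v ∈ latt M) : u + v ∈ latt M := by
  obtain ⟨z, rfl⟩ := hu
  obtain ⟨w, rfl⟩ := hv
  exact ⟨z + w, by rw [← Matrix.mulVec_add]; congr 1; funext i; simp⟩

lemma mulVec_intCast_map (W : Matrix (Fin 2) (Fin 2) ℤ) (z : Fin 2 → ℤ) :
    W.map (Int.cast : ℤ → ℝ) *ᵥ (fun i => (z i : ℝ)) = fun i => ((W *ᵥ z) i : ℝ) :=
  funext fun i => (RingHom.map_mulVec (Int.castRingHom ℝ) W z i).symm

lemma latt_mul_intCast_subset (M : Matrix (Fin 2) (Fin 2) ℝ) (W : Matrix (Fin 2) (Fin 2) ℤ) :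
    latt (M * W.map (Int.cast : ℤ → ℝ)) ⊆ latt M := by
  rintro x ⟨z, rfl⟩
  exact ⟨W *ᵥ z, by rw [← Matrix.mulVec_mulVec, mulVec_intCast_map]⟩

lemma latt_mul_intCast_of_isUnit_det (M : Matrix (Fin 2) (Fin 2) ℝ)
    {W : Matrix (Fin 2) (Fin 2) ℤ} (hW : IsUnit W.det) :
    latt (M * W.map (Int.cast : ℤ → ℝ)) = latt M := by
  refine (latt_mul_intCast_subset M W).antisymm ?_
  have hinv : M * W.map (Int.cast : ℤ → ℝ) * W⁻¹.map (Int.cast : ℤ → ℝ) = M := by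
    rw [Matrix.mul_assoc, show (Int.cast : ℤ → ℝ) = ⇑(Int.castRingHom ℝ) from rfl,
      ← Matrix.map_mul, Matrix.mul_nonsing_inv _ hW]
    simp
  simpa only [hinv] using latt_mul_intCast_subset (M * W.map (Int.cast : ℤ → ℝ)) W⁻¹

lemma latt_mul_add_mul_subset (A B : Matrix (Fin 2) (Fin 2) ℝ) (X Y : Matrix (Fin 2) (Fin 2) ℤ) :
    latt (A * X.map (Int.cast : ℤ → ℝ) + B * Y.map (Int.cast : ℤ → ℝ)) ⊆
      {x | ∃ a ∈ latt A, ∃ b ∈ latt B, x = a + b} := by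
  rintro x ⟨z, rfl⟩
  refine ⟨_, latt_mul_intCast_subset A X ⟨z, rfl⟩, _, latt_mul_intCast_subset B Y ⟨z, rfl⟩, ?_⟩
  rw [Matrix.add_mulVec]

lemma latt_eq_sum_of_mul_intCast {A B D : Matrix (Fin 2) (Fin 2) ℝ}
    {X Y S T : Matrix (Fin 2) (Fin 2) ℤ}
    (hD : D = A * X.map (Int.cast : ℤ → ℝ) + B * Y.map (Int.cast : ℤ → ℝ))
    (hA : A = D * S.map (Int.cast : ℤ → ℝ)) (hB : B = D * T.map (Int.cast : ℤ → ℝ)) :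
    latt D = {x | ∃ a ∈ latt A, ∃ b ∈ latt B, x = a + b} := by
  refine (hD ▸ latt_mul_add_mul_subset A B X Y).antisymm ?_
  rintro x ⟨a, ha, b, hb, rfl⟩
  rw [hA] at ha
  rw [hB] at hb
  exact add_mem_latt (latt_mul_intCast_subset D S ha) (latt_mul_intCast_subset D T hb)

section ParallelVectors

variable {K : Type*} [Field K] [CharZero K] {μ δ : ℤ} {a b c : K}

lemma eq_gcdA_mul_add_gcdB_mul (hμ : μ ≠ 0) (hab : μ * b = δ * a)
    (hc : c = Int.gcd μ δ / μ * a) : c = Int.gcdA μ δ * a + Int.gcdB μ δ * b := by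
  have hbez : ((Int.gcd μ δ : ℤ) : K) = μ * Int.gcdA μ δ + δ * Int.gcdB μ δ := by
    exact_mod_cast Int.gcd_eq_gcd_ab μ δ
  have hμK : (μ : K) ≠ 0 := Int.cast_ne_zero.mpr hμ
  rw [hc, div_mul_eq_mul_div, div_eq_iff hμK]
  push_cast at hbez
  linear_combination a * hbez - Int.gcdB μ δ * hab

lemma eq_div_gcd_mul_left (hμ : μ ≠ 0) (hc : c = Int.gcd μ δ / μ * a) :
    a = ((μ / Int.gcd μ δ : ℤ) : K) * c := by
  have hg : ((Int.gcd μ δ : ℤ) : K) ≠ 0 := by exact_mod_cast Int.gcd_ne_zero_left hμ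
  have hμK : (μ : K) ≠ 0 := Int.cast_ne_zero.mpr hμ
  rw [Int.cast_div (Int.gcd_dvd_left μ δ) hg, hc]
  push_cast at hg ⊢
  field_simp

lemma eq_div_gcd_mul_right (hμ : μ ≠ 0) (hab : μ * b = δ * a)
    (hc : c = Int.gcd μ δ / μ * a) : b = ((δ / Int.gcd μ δ : ℤ) : K) * c := by
  have hg : ((Int.gcd μ δ : ℤ) : K) ≠ 0 := by exact_mod_cast Int.gcd_ne_zero_left hμ
  have hμK : (μ : K) ≠ 0 := Int.cast_ne_zero.mpr hμ
  rw [Int.cast_div (Int.gcd_dvd_right μ δ) hg, hc]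
  push_cast at hg ⊢
  field_simp
  linear_combination hab

end ParallelVectors

theorem snf_dscl_basis_general
    (A B : Matrix (Fin 2) (Fin 2) ℝ)
    (μ : ℤ) (hμ : 0 < μ)
    (U V : Matrix (Fin 2) (Fin 2) ℤ) (hU : IsUnit U.det) (hV : IsUnit V.det)
    (d : Fin 2 → ℤ)
    (Apar Bpar : Matrix (Fin 2) (Fin 2) ℝ)
    (hApar : Apar = A * U.map (Int.cast : ℤ → ℝ))
    (hBpar : Bpar = B * V.map (Int.cast : ℤ → ℝ))
    (hpar : ∀ i j : Fin 2, (μ : ℝ) * Bpar j i = (d i : ℝ) * Apar j i)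
    (Dpar : Matrix (Fin 2) (Fin 2) ℝ)
    (hDpar : ∀ i j : Fin 2,
      Dpar j i = ((Int.gcd μ (d i) : ℝ) / (d i : ℝ)) * Bpar j i ∧
      Dpar j i = ((Int.gcd μ (d i) : ℝ) / (μ : ℝ)) * Apar j i) :
    latt Dpar = {x | ∃ a ∈ latt A, ∃ b ∈ latt B, x = a + b} := by
  have hμ0 : μ ≠ 0 := hμ.ne'
  have hD : Dpar = Apar * (diagonal fun i => Int.gcdA μ (d i)).map (Int.cast : ℤ → ℝ)
      + Bpar * (diagonal fun i => Int.gcdB μ (d i)).map (Int.cast : ℤ → ℝ) := by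
    ext j i
    simpa [mul_comm] using eq_gcdA_mul_add_gcdB_mul hμ0 (hpar i j) (hDpar i j).2
  have hA : Apar = Dpar * (diagonal fun i => μ / Int.gcd μ (d i)).map (Int.cast : ℤ → ℝ) := by
    ext j i
    simpa [mul_comm] using eq_div_gcd_mul_left hμ0 (hDpar i j).2
  have hB : Bpar = Dpar * (diagonal fun i => d i / Int.gcd μ (d i)).map (Int.cast : ℤ → ℝ) := by
    ext j i
    simpa [mul_comm] using eq_div_gcd_mul_right hμ0 (hpar i j) (hDpar i j).2
  rw [latt_eq_sum_of_mul_intCast hD hA hB, hApar, hBpar, latt_mul_intCast_of_isUnit_det A hU,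
    latt_mul_intCast_of_isUnit_det B hV]

/-- With the parallel bases `μ·b∥ᵢ = δᵢ·a∥ᵢ`, the vectors
`d∥ᵢ = (gcd(μ,δᵢ)/δᵢ)·b∥ᵢ = (gcd(μ,δᵢ)/μ)·a∥ᵢ` form a basis of the
DSCL `𝒟 = 𝒜 + ℬ`. -/
theorem snf_dscl_basis
    (A B : Matrix (Fin 2) (Fin 2) ℝ) (hA : IsUnit A.det) (hB : IsUnit B.det)
    (μ : ℤ) (hμ : 0 < μ) (P : Matrix (Fin 2) (Fin 2) ℤ)
    (hcop : Int.gcd μ (Int.gcd (Int.gcd (P 0 0) (P 0 1)) (Int.gcd (P 1 0) (P 1 1))) = 1)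
    (hT : A⁻¹ * B = ((μ : ℝ))⁻¹ • (P.map (Int.cast : ℤ → ℝ)))
    (U V : Matrix (Fin 2) (Fin 2) ℤ) (hU : IsUnit U.det) (hV : IsUnit V.det)
    (d : Fin 2 → ℤ) (hd : d 0 ∣ d 1)
    (hSNF : P = U * Matrix.diagonal d * V⁻¹)
    (Apar Bpar : Matrix (Fin 2) (Fin 2) ℝ)
    (hApar : Apar = A * U.map (Int.cast : ℤ → ℝ))
    (hBpar : Bpar = B * V.map (Int.cast : ℤ → ℝ))
    (hpar : ∀ i j : Fin 2, (μ : ℝ) * Bpar j i = (d i : ℝ) * Apar j i)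
    (Dpar : Matrix (Fin 2) (Fin 2) ℝ)
    (hDpar : ∀ i j : Fin 2,
      Dpar j i = ((Int.gcd μ (d i) : ℝ) / (d i : ℝ)) * Bpar j i ∧
      Dpar j i = ((Int.gcd μ (d i) : ℝ) / (μ : ℝ)) * Apar j i) :
    latt Dpar = {x | ∃ a ∈ latt A, ∃ b ∈ latt B, x = a + b} :=
  snf_dscl_basis_general A B μ hμ U V hU hV d Apar Bpar hApar hBpar hpar Dpar hDpar
end

section
/- Let 𝒜 = Aℤ² be a lattice and F ∈ GL(2,ℝ). The deformed lattice F𝒜 shares a full-rank intersection lattice with 𝒜 if and only if the matrix A⁻¹FA is rational. -/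
def FullRankSet (S : Set (Fin 2 → ℝ)) : Prop :=
  ∃ v ∈ S, ∃ w ∈ S, LinearIndependent ℝ ![v, w]

def IsRatMat (T : Matrix (Fin 2) (Fin 2) ℝ) : Prop :=
  ∀ i j, ∃ q : ℚ, T i j = (q : ℝ)

open Matrix

namespace Matrix

variable {l m n : Type*} [Fintype n]

lemma of_mulVec_eq_mul_transpose {α : Type*} [CommSemiring α] (M : Matrix l n α)
    (x : m → n → α) :
    Matrix.of (fun i => M *ᵥ x i) = Matrix.of x * Mᵀ := by
  ext i j
  simp [Matrix.mul_apply, Matrix.mulVec, dotProduct, mul_comm]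

lemma exists_map_intCast_eq_smul [Finite m] (R : Matrix m n ℚ) :
    ∃ d : ℤ, d ≠ 0 ∧ ∃ Z : Matrix m n ℤ, Z.map (↑) = d • R := by
  obtain ⟨⟨d, hd⟩, hZ⟩ := IsLocalization.exist_integer_multiples_of_finite
    (nonZeroDivisors ℤ) (fun p : m × n => R p.1 p.2)
  choose Z hZ using hZ
  exact ⟨d, nonZeroDivisors.ne_zero hd, Matrix.of fun i j => Z (i, j),
    by ext i j; simpa using hZ (i, j)⟩

variable {K L : Type*} [DecidableEq n] [Field K] [Field L]

lemma map_nonsing_inv (f : K →+* L) (M : Matrix n n K) : M⁻¹.map f = (M.map f)⁻¹ := by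
  by_cases hM : IsUnit M.det
  · refine (inv_eq_left_inv ?_).symm
    rw [← Matrix.map_mul, nonsing_inv_mul _ hM, Matrix.map_one _ f.map_zero f.map_one]
  · have hfM : ¬IsUnit (M.map f).det := by
      rwa [← RingHom.mapMatrix_apply, ← RingHom.map_det, isUnit_map_iff]
    rw [nonsing_inv_apply_not_isUnit _ hM, nonsing_inv_apply_not_isUnit _ hfM,
      Matrix.map_zero _ f.map_zero]

lemma eq_map_of_map_eq_mul (f : K →+* L) {P Q : Matrix n n K} {T : Matrix n n L}
    (hP : IsUnit (P.map f)) (h : P.map f = Q.map f * T) :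
    T = (Q⁻¹ * P).map f := by
  have hQ : IsUnit (Q.map f).det :=
    (isUnit_iff_isUnit_det _).mp (isUnit_of_mul_isUnit_left (h ▸ hP))
  rw [Matrix.map_mul, map_nonsing_inv, h, ← Matrix.mul_assoc, nonsing_inv_mul _ hQ,
    Matrix.one_mul]

end Matrix

lemma isRatMat_iff_exists_map (T : Matrix (Fin 2) (Fin 2) ℝ) :
    IsRatMat T ↔ ∃ R : Matrix (Fin 2) (Fin 2) ℚ, R.map (↑) = T := by
  refine ⟨fun h => ?_, fun ⟨R, hR⟩ i j => ⟨R i j, by simp [← hR]⟩⟩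
  choose R hR using h
  exact ⟨Matrix.of R, by ext i j; simp [hR]⟩

lemma fullRankSet_iff_exists_linearIndependent (S : Set (Fin 2 → ℝ)) :
    FullRankSet S ↔ ∃ u : Fin 2 → Fin 2 → ℝ, (∀ i, u i ∈ S) ∧ LinearIndependent ℝ u := by
  constructor
  · rintro ⟨v, hv, w, hw, hvw⟩
    exact ⟨![v, w], Fin.forall_fin_two.mpr ⟨hv, hw⟩, hvw⟩
  · rintro ⟨u, hu, hli⟩
    refine ⟨u 0, hu 0, u 1, hu 1, ?_⟩
    convert hli
    ext i : 1
    fin_cases i <;> rfl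

lemma fullRankSet_image_iff (f : (Fin 2 → ℝ) →ₗ[ℝ] Fin 2 → ℝ) (hf : Function.Injective f)
    (S : Set (Fin 2 → ℝ)) : FullRankSet (f '' S) ↔ FullRankSet S := by
  simp only [fullRankSet_iff_exists_linearIndependent]
  constructor
  · rintro ⟨u, hu, hli⟩
    choose s hs hsu using hu
    obtain rfl : u = f ∘ s := funext fun i => (hsu i).symm
    exact ⟨s, hs, hli.of_comp f⟩
  · rintro ⟨s, hs, hli⟩
    exact ⟨f ∘ s, fun i => Set.mem_image_of_mem f (hs i),
      hli.map' f (LinearMap.ker_eq_bot.mpr hf)⟩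

lemma latt_mul (M N : Matrix (Fin 2) (Fin 2) ℝ) : latt (M * N) = M.mulVec '' latt N := by
  ext v
  constructor
  · rintro ⟨z, rfl⟩
    exact ⟨_, ⟨z, rfl⟩, mulVec_mulVec _ _ _⟩
  · rintro ⟨_, ⟨z, rfl⟩, rfl⟩
    exact ⟨z, mulVec_mulVec _ _ _⟩

lemma latt_inter_latt_mul_eq_image {A : Matrix (Fin 2) (Fin 2) ℝ} (hA : IsUnit A.det)
    (F : Matrix (Fin 2) (Fin 2) ℝ) :
    latt A ∩ latt (F * A) = A.mulVec '' (latt 1 ∩ latt (A⁻¹ * F * A)) := by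
  have hFA : F * A = A * (A⁻¹ * F * A) := by
    rw [← Matrix.mul_assoc, ← Matrix.mul_assoc, mul_nonsing_inv _ hA, Matrix.one_mul]
  rw [Set.image_inter (mulVec_injective_iff_isUnit.mpr ((isUnit_iff_isUnit_det A).mpr hA)),
    ← latt_mul, ← latt_mul, Matrix.mul_one, hFA]

lemma isRatMat_of_fullRankSet_latt_one_inter {T : Matrix (Fin 2) (Fin 2) ℝ}
    (h : FullRankSet (latt 1 ∩ latt T)) : IsRatMat T := by
  obtain ⟨u, hu, hli⟩ := (fullRankSet_iff_exists_linearIndependent _).mp h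
  choose a ha using fun i => (hu i).1
  choose b hb using fun i => (hu i).2
  set Z : Matrix (Fin 2) (Fin 2) ℚ := (Matrix.of a).map (↑)
  set W : Matrix (Fin 2) (Fin 2) ℚ := (Matrix.of b).map (↑)
  have hZ : Z.map (Rat.castHom ℝ) = Matrix.of u := by
    ext i j
    simp [Z, ha]
  have hW : Matrix.of u = W.map (Rat.castHom ℝ) * Tᵀ := by
    calc Matrix.of u = Matrix.of fun i => T *ᵥ W.map (Rat.castHom ℝ) i := by
          ext i j
          simp [W, hb]
      _ = _ := of_mulVec_eq_mul_transpose _ _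
  have hZu : IsUnit (Z.map (Rat.castHom ℝ)) := hZ ▸ linearIndependent_rows_iff_isUnit.mp hli
  have hT := eq_map_of_map_eq_mul (Rat.castHom ℝ) hZu (hZ.trans hW)
  refine (isRatMat_iff_exists_map T).mpr ⟨(W⁻¹ * Z)ᵀ, ?_⟩
  rw [Rat.coe_castHom] at hT
  rw [transpose_map, ← hT, transpose_transpose]

lemma fullRankSet_latt_one_inter_of_isRatMat {T : Matrix (Fin 2) (Fin 2) ℝ} (hT : IsUnit T.det)
    (h : IsRatMat T) : FullRankSet (latt 1 ∩ latt T) := by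
  obtain ⟨R, rfl⟩ := (isRatMat_iff_exists_map T).mp h
  obtain ⟨d, hd, Z, hZ⟩ := exists_map_intCast_eq_smul R
  have hZT : Z.map ((↑) : ℤ → ℝ) = (d : ℝ) • R.map (↑) := by
    ext i j
    simpa [zsmul_eq_mul] using congr_arg ((↑) : ℚ → ℝ) (congr_fun₂ hZ i j)
  refine (fullRankSet_iff_exists_linearIndependent _).mpr
    ⟨(Z.map (↑)).col, fun j => ⟨⟨fun i => Z i j, ?_⟩, ⟨Pi.single j d, ?_⟩⟩, ?_⟩
  · ext i
    simp
  · rw [hZT]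
    ext i
    simp [mulVec, dotProduct, Pi.single_apply, mul_comm]
  · rw [linearIndependent_cols_iff_isUnit, hZT, isUnit_iff_isUnit_det, det_smul]
    simpa [hd] using hT

/-- Homostructure coincidence criterion: the deformed lattice `F𝒜` shares a full-rank
intersection lattice with `𝒜` iff `A⁻¹FA` is rational. -/
theorem homostructure_coincidence_criterion
    (A F : Matrix (Fin 2) (Fin 2) ℝ) (hA : IsUnit A.det) (hF : IsUnit F.det) :
    FullRankSet (latt A ∩ latt (F * A)) ↔ IsRatMat (A⁻¹ * F * A) := by
  have hA' : IsUnit A := (isUnit_iff_isUnit_det A).mpr hA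
  have hAinj : Function.Injective A.mulVecLin := mulVec_injective_iff_isUnit.mpr hA'
  have hT : IsUnit (A⁻¹ * F * A).det := by rwa [det_conj' hA']
  rw [latt_inter_latt_mul_eq_image hA F, ← coe_mulVecLin, fullRankSet_image_iff _ hAinj]
  exact ⟨isRatMat_of_fullRankSet_latt_one_inter, fullRankSet_latt_one_inter_of_isRatMat hT⟩
end
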